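/- Let g₁,…,gₘ ∈ ℝ[X₁,…,Xₙ] and K := {x ∈ ℝⁿ : gⱼ(x) ≥ 0, j = 1,…,m}. Assume the Archimedean assumption and Slater's condition hold, that for every j, ∇gⱼ(y) ≠ 0 whenever y ∈ K and gⱼ(y) = 0, and that the certificate of convexity holds with degree bounds 2d₁,…,2dₘ; set d := maxⱼ dⱼ. Then K is convex and K = {x ∈ ℝⁿ : there exists a linear functional L on the polynomials of degree at most 2d with L(1) = 1, L(Xᵢ) = xᵢ for i = 1,…,n, L(σ) ≥ 0 for every SOS polynomial σ of degree at most 2d, and L(σ·gⱼ) ≥ 0 for every j = 1,…,m and every SOS polynomial σ with deg(σ·gⱼ) ≤ 2d}. -/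

import Mathlib

open MvPolynomial

/-- A polynomial is SOS if it is a finite sum of squares of polynomials. -/
def IsSOS {τ : Type*} (p : MvPolynomial τ ℝ) : Prop :=
  ∃ (k : ℕ) (q : Fin k → MvPolynomial τ ℝ), p = ∑ i, q i ^ 2

/-- A polynomial is SOS of degree at most `2d` if it is a finite sum of squares of
polynomials, each of degree at most `d`. -/
def IsSOSUpTo {τ : Type*} (d : ℕ) (p : MvPolynomial τ ℝ) : Prop :=
  ∃ (k : ℕ) (q : Fin k → MvPolynomial τ ℝ),
    (∀ i, (q i).totalDegree ≤ d) ∧ p = ∑ i, q i ^ 2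

/-- `g_k(X)`: the polynomial `g k` in the first group of variables of `ℝ[X,Y]`. -/
noncomputable def gXp {n m : ℕ} (g : Fin m → MvPolynomial (Fin n) ℝ) (k : Fin m) :
    MvPolynomial (Fin n ⊕ Fin n) ℝ := rename Sum.inl (g k)

/-- `g_k(Y)`: the polynomial `g k` in the second group of variables of `ℝ[X,Y]`. -/
noncomputable def gYp {n m : ℕ} (g : Fin m → MvPolynomial (Fin n) ℝ) (k : Fin m) :
    MvPolynomial (Fin n ⊕ Fin n) ℝ := rename Sum.inr (g k)

/-- The polynomial `⟨∇gⱼ(Y), X − Y⟩ = Σᵢ (∂gⱼ/∂Xᵢ)(Y)·(Xᵢ − Yᵢ) ∈ ℝ[X,Y]`. -/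
noncomputable def gradIP {n m : ℕ} (g : Fin m → MvPolynomial (Fin n) ℝ) (j : Fin m) :
    MvPolynomial (Fin n ⊕ Fin n) ℝ :=
  ∑ i, rename Sum.inr (pderiv i (g j)) * (X (Sum.inl i) - X (Sum.inr i))

/-- The certificate of convexity with degree bounds `2dⱼ`:
`⟨∇gⱼ(Y), X−Y⟩ = Σ_{k=0}^m σ_{jk}·g_k(X) + Σ_{k≠j} ψ_{jk}·g_k(Y) + ψⱼ·gⱼ(Y)` (`g₀ ≡ 1`)
with `σ_{jk}` and `ψ_{jk}` (`k ≠ j`) SOS, all products of degree at most `2dⱼ`. -/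
def CertificateOfConvexity {n m : ℕ} (g : Fin m → MvPolynomial (Fin n) ℝ)
    (dj : Fin m → ℕ) : Prop :=
  ∀ j : Fin m,
    ∃ (σ0 ψ0 : MvPolynomial (Fin n ⊕ Fin n) ℝ)
      (σ ψ : Fin m → MvPolynomial (Fin n ⊕ Fin n) ℝ)
      (ψj : MvPolynomial (Fin n ⊕ Fin n) ℝ),
      IsSOS σ0 ∧ IsSOS ψ0 ∧ (∀ k, IsSOS (σ k)) ∧ (∀ k, k ≠ j → IsSOS (ψ k)) ∧
      gradIP g j =
        σ0 + (∑ k, σ k * gXp g k) + ψ0 + (∑ k ∈ Finset.univ.erase j, ψ k * gYp g k)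
          + ψj * gYp g j ∧
      σ0.totalDegree ≤ 2 * dj j ∧ ψ0.totalDegree ≤ 2 * dj j ∧
      (∀ k, (σ k * gXp g k).totalDegree ≤ 2 * dj j) ∧
      (∀ k, k ≠ j → (ψ k * gYp g k).totalDegree ≤ 2 * dj j) ∧
      (ψj * gYp g j).totalDegree ≤ 2 * dj j

/-!
If `x = (L X₁, …, L Xₙ)` for a pseudo-moment functional `L` of order `d` but `x ∉ K`, the segment
from a Slater point `x₀` to `x` leaves `K` at a point `u` with `gⱼ(u) = 0`. Substituting `Y := u`
in the certificate of convexity of `gⱼ` puts the affine form `ℓ(X) = ⟨∇gⱼ(u), X - u⟩` into the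
truncated quadratic module of order `d`. Hence `ℓ ≥ 0` on `K`, so `ℓ(x₀) > 0` because `x₀` is
interior and `∇gⱼ(u) ≠ 0`; and `ℓ(x) = L ℓ ≥ 0`. But `u` lies strictly between `x₀` and `x`, so
`ℓ(x₀)` and `ℓ(x)` have opposite signs. For `L ℓ ≥ 0` one needs that a sum of squares of degree
`≤ 2d` is a sum of squares of polynomials of degree `≤ d`: over `ℝ` the top homogeneous components
of the squares cannot cancel. Convexity of `K` then comes from the convexity of the moment set.
-/

open Set Filter Topology

theorem IsSumSq.map {R S F : Type*} [CommSemiring R] [CommSemiring S] [FunLike F R S]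
    [RingHomClass F R S] (f : F) {s : R} (hs : IsSumSq s) : IsSumSq (f s) := by
  induction hs with
  | zero => simp
  | sq_add a _ ih => simpa using ih.sq_add (f a)

theorem isSOS_iff_isSumSq {σ : Type*} {p : MvPolynomial σ ℝ} : IsSOS p ↔ IsSumSq p := by
  constructor
  · rintro ⟨k, q, rfl⟩
    exact IsSumSq.sum_sq _ q
  · intro hp
    induction hp with
    | zero => exact ⟨0, ![], by simp⟩
    | sq_add a _ ih =>
      obtain ⟨k, q, rfl⟩ := ih
      exact ⟨k + 1, Fin.cons a q, by simp [Fin.sum_univ_succ, sq]⟩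

namespace MvPolynomial

variable {σ τ : Type*}

theorem homogeneousComponent_mul_of_totalDegree_le {R : Type*} [CommSemiring R]
    {p q : MvPolynomial σ R} {a b : ℕ} (hp : p.totalDegree ≤ a) (hq : q.totalDegree ≤ b) :
    homogeneousComponent (a + b) (p * q) = homogeneousComponent a p * homogeneousComponent b q := by
  classical
  ext v
  have hhom := (homogeneousComponent_isHomogeneous a p).mul (homogeneousComponent_isHomogeneous b q)
  rw [coeff_homogeneousComponent]
  split_ifs with hv
  · rw [coeff_mul, coeff_mul]
    refine Finset.sum_congr rfl fun x hx => ?_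
    rw [Finset.HasAntidiagonal.mem_antidiagonal] at hx
    have hdeg : x.1.degree + x.2.degree = a + b := by rw [← hv, ← hx, map_add]
    simp only [coeff_homogeneousComponent]
    by_cases hxa : x.1.degree = a
    · rw [if_pos hxa, if_pos (by omega)]
    · rw [if_neg hxa, zero_mul]
      rcases lt_or_gt_of_ne hxa with hlt | hgt
      · rw [coeff_eq_zero_of_totalDegree_lt (d := x.2) (by change _ < x.2.degree; omega), mul_zero]
      · rw [coeff_eq_zero_of_totalDegree_lt (d := x.1) (by change _ < x.1.degree; omega), zero_mul]
  · exact (hhom.coeff_eq_zero hv).symm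

theorem homogeneousComponent_totalDegree_ne_zero {R : Type*} [CommSemiring R]
    {p : MvPolynomial σ R} (hp : p ≠ 0) : homogeneousComponent p.totalDegree p ≠ 0 := by
  obtain ⟨v, hv, hdeg⟩ := Finset.exists_mem_eq_sup p.support (support_nonempty.2 hp)
    fun v => v.sum fun _ e => e
  have hcoeff : coeff v (homogeneousComponent p.totalDegree p) = coeff v p := by
    rw [coeff_homogeneousComponent, if_pos (by rw [totalDegree, hdeg]; rfl)]
  exact fun h => mem_support_iff.1 hv (by rw [← hcoeff, h, coeff_zero])

theorem eq_zero_of_sum_sq_eq_zero {ι : Type*} {s : Finset ι} {q : ι → MvPolynomial σ ℝ}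
    (h : ∑ i ∈ s, q i ^ 2 = 0) {i : ι} (hi : i ∈ s) : q i = 0 := by
  refine MvPolynomial.funext fun x => ?_
  have hx : ∑ i ∈ s, eval x (q i) ^ 2 = 0 := by simpa using congrArg (eval x) h
  simpa using (Finset.sum_eq_zero_iff_of_nonneg fun i _ => sq_nonneg _).1 hx i hi

theorem totalDegree_le_of_totalDegree_sum_sq_le {ι : Type*} {s : Finset ι}
    {q : ι → MvPolynomial σ ℝ} {d : ℕ} (h : (∑ i ∈ s, q i ^ 2).totalDegree ≤ 2 * d) {i : ι}
    (hi : i ∈ s) : (q i).totalDegree ≤ d := by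
  by_contra! hid
  set D := s.sup fun i => (q i).totalDegree
  have hle : ∀ i ∈ s, (q i).totalDegree ≤ D := fun i hi =>
    Finset.le_sup (f := fun i => (q i).totalDegree) hi
  obtain ⟨i₁, hi₁, hD⟩ := Finset.exists_mem_eq_sup s ⟨i, hi⟩ fun i => (q i).totalDegree
  have hdD : d < D := hid.trans_le (hle i hi)
  have htop : ∑ i ∈ s, homogeneousComponent D (q i) ^ 2 = 0 := by
    rw [← homogeneousComponent_eq_zero (2 * D) (∑ i ∈ s, q i ^ 2) (by omega), map_sum]
    refine Finset.sum_congr rfl fun i hi => ?_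
    rw [sq, sq, two_mul, homogeneousComponent_mul_of_totalDegree_le (hle i hi) (hle i hi)]
  have hq₁ : q i₁ ≠ 0 := fun h0 => by rw [h0, totalDegree_zero] at hD; omega
  exact homogeneousComponent_totalDegree_ne_zero hq₁ (by
    rw [← hD]; exact eq_zero_of_sum_sq_eq_zero htop hi₁)

theorem totalDegree_aeval_le {R : Type*} [CommSemiring R] {f : σ → MvPolynomial τ R}
    (hf : ∀ s, (f s).totalDegree ≤ 1) (p : MvPolynomial σ R) :
    (aeval f p).totalDegree ≤ p.totalDegree := by
  conv_lhs => rw [p.as_sum, map_sum]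
  refine totalDegree_finsetSum_le fun v hv => ?_
  rw [aeval_monomial, algebraMap_eq]
  calc (C (coeff v p) * v.prod fun s e => f s ^ e).totalDegree
      ≤ (v.prod fun s e => f s ^ e).totalDegree :=
        (totalDegree_mul _ _).trans (by rw [totalDegree_C, zero_add])
    _ ≤ ∑ s ∈ v.support, (f s ^ v s).totalDegree := totalDegree_finsetProd _ _
    _ ≤ ∑ s ∈ v.support, v s := Finset.sum_le_sum fun s _ =>
        (totalDegree_pow _ _).trans (by simpa using Nat.mul_le_mul_left (v s) (hf s))
    _ ≤ p.totalDegree := le_totalDegree hv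

noncomputable def evalInr (u : τ → ℝ) : MvPolynomial (σ ⊕ τ) ℝ →ₐ[ℝ] MvPolynomial σ ℝ :=
  aeval (Sum.elim X (C ∘ u))

theorem evalInr_rename_inl (u : τ → ℝ) (p : MvPolynomial σ ℝ) :
    evalInr u (rename Sum.inl p) = p := by
  rw [evalInr, aeval_rename, Sum.elim_comp_inl, aeval_X_left_apply]

theorem evalInr_rename_inr (u : τ → ℝ) (p : MvPolynomial τ ℝ) :
    evalInr (σ := σ) u (rename Sum.inr p) = C (eval u p) := by
  rw [evalInr, aeval_rename, Sum.elim_comp_inr]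
  exact (comp_aeval_apply u (Algebra.ofId ℝ (MvPolynomial σ ℝ)) p).symm

theorem totalDegree_evalInr_le (u : τ → ℝ) (p : MvPolynomial (σ ⊕ τ) ℝ) :
    (evalInr u p).totalDegree ≤ p.totalDegree :=
  totalDegree_aeval_le (fun s => by cases s <;> simp [totalDegree_X]) p

@[simp]
theorem evalInr_X_inl (u : τ → ℝ) (i : σ) : evalInr u (X (Sum.inl i)) = X i := by
  simp [evalInr]

@[simp]
theorem evalInr_X_inr (u : τ → ℝ) (i : τ) : evalInr (σ := σ) u (X (Sum.inr i)) = C (u i) := by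
  simp [evalInr]

noncomputable def affineForm [Fintype σ] (w u : σ → ℝ) : MvPolynomial σ ℝ :=
  ∑ i, C (w i) * (X i - C (u i))

theorem map_affineForm [Fintype σ] {L : MvPolynomial σ ℝ →ₗ[ℝ] ℝ} {x : σ → ℝ} (hL1 : L 1 = 1)
    (hLX : ∀ i, L (X i) = x i) (w u : σ → ℝ) : L (affineForm w u) = w ⬝ᵥ (x - u) := by
  simp [affineForm, dotProduct, C_eq_smul_one, hL1, hLX]

end MvPolynomial

theorem IsSumSq.isSOSUpTo {σ : Type*} {p : MvPolynomial σ ℝ} {d : ℕ} (hp : IsSumSq p)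
    (hdeg : p.totalDegree ≤ 2 * d) : IsSOSUpTo d p := by
  obtain ⟨k, q, rfl⟩ := isSOS_iff_isSumSq.2 hp
  exact ⟨k, q, fun i => totalDegree_le_of_totalDegree_sum_sq_le hdeg (Finset.mem_univ i), rfl⟩

theorem evalInr_gradIP {n m : ℕ} (g : Fin m → MvPolynomial (Fin n) ℝ) (j : Fin m)
    (u : Fin n → ℝ) :
    evalInr u (gradIP g j) = affineForm (fun i => eval u (pderiv i (g j))) u := by
  simp [gradIP, affineForm, evalInr_rename_inr]

section QuadraticModule

variable {σ ι : Type*} [Fintype ι]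

def truncatedQuadraticModule (g : ι → MvPolynomial σ ℝ) (d : ℕ) : Set (MvPolynomial σ ℝ) :=
  {p | ∃ (s₀ : MvPolynomial σ ℝ) (s : ι → MvPolynomial σ ℝ), IsSumSq s₀ ∧ (∀ k, IsSumSq (s k)) ∧
    s₀.totalDegree ≤ 2 * d ∧ (∀ k, (s k * g k).totalDegree ≤ 2 * d) ∧ p = s₀ + ∑ k, s k * g k}

theorem truncatedQuadraticModule_mono (g : ι → MvPolynomial σ ℝ) {d d' : ℕ} (h : d ≤ d') :
    truncatedQuadraticModule g d ⊆ truncatedQuadraticModule g d' := by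
  rintro p ⟨s₀, s, hs₀, hs, hd₀, hd, rfl⟩
  exact ⟨s₀, s, hs₀, hs, hd₀.trans (by omega), fun k => (hd k).trans (by omega), rfl⟩

theorem map_nonneg_of_mem_truncatedQuadraticModule {g : ι → MvPolynomial σ ℝ} {d : ℕ}
    {L : MvPolynomial σ ℝ →ₗ[ℝ] ℝ} (hsos : ∀ p, IsSOSUpTo d p → 0 ≤ L p)
    (hloc : ∀ j p, IsSOS p → (p * g j).totalDegree ≤ 2 * d → 0 ≤ L (p * g j))
    {p : MvPolynomial σ ℝ} (hp : p ∈ truncatedQuadraticModule g d) : 0 ≤ L p := by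
  obtain ⟨s₀, s, hs₀, hs, hd₀, hd, rfl⟩ := hp
  rw [map_add, map_sum]
  exact add_nonneg (hsos _ (hs₀.isSOSUpTo hd₀))
    (Finset.sum_nonneg fun k _ => hloc k _ (isSOS_iff_isSumSq.2 (hs k)) (hd k))

end QuadraticModule

theorem CertificateOfConvexity.evalInr_gradIP_mem {n m : ℕ} {g : Fin m → MvPolynomial (Fin n) ℝ}
    {dj : Fin m → ℕ} (hcert : CertificateOfConvexity g dj) (j : Fin m) {u : Fin n → ℝ}
    (hu : ∀ k, 0 ≤ eval u (g k)) (hj : eval u (g j) = 0) :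
    evalInr u (gradIP g j) ∈ truncatedQuadraticModule g (dj j) := by
  obtain ⟨σ₀, ψ₀, σ, ψ, ψj, hσ₀, hψ₀, hσ, hψ, heq, hdσ₀, hdψ₀, hdσ, hdψ, -⟩ := hcert j
  have hX : ∀ p k, evalInr u (p * gXp g k) = evalInr u p * g k := fun p k => by
    rw [map_mul, gXp, evalInr_rename_inl]
  have hY : ∀ p k, evalInr u (p * gYp g k) = evalInr u p * C (eval u (g k)) := fun p k => by
    rw [map_mul, gYp, evalInr_rename_inr]
  have hsos : ∀ {p : MvPolynomial (Fin n ⊕ Fin n) ℝ}, IsSOS p →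
      IsSumSq (evalInr (σ := Fin n) u p) := fun hp => (isSOS_iff_isSumSq.1 hp).map _
  refine ⟨evalInr u σ₀ + evalInr u ψ₀ + ∑ k ∈ Finset.univ.erase j, evalInr u (ψ k * gYp g k),
    fun k => evalInr u (σ k), ?_, fun k => hsos (hσ k), ?_, fun k => ?_, ?_⟩
  · refine (hsos hσ₀).add (hsos hψ₀) |>.add (IsSumSq.sum fun k hk => ?_)
    rw [hY]
    refine (hsos (hψ k (Finset.ne_of_mem_erase hk))).mul (IsSquare.isSumSq ?_)
    exact ⟨C √(eval u (g k)), by rw [← C_mul, Real.mul_self_sqrt (hu k)]⟩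
  · refine (totalDegree_add _ _).trans (max_le ((totalDegree_add _ _).trans (max_le ?_ ?_)) ?_)
    · exact (totalDegree_evalInr_le _ _).trans hdσ₀
    · exact (totalDegree_evalInr_le _ _).trans hdψ₀
    · exact totalDegree_finsetSum_le fun k hk =>
        (totalDegree_evalInr_le _ _).trans (hdψ k (Finset.ne_of_mem_erase hk))
  · rw [← hX]
    exact (totalDegree_evalInr_le _ _).trans (hdσ k)
  · rw [heq, map_add, map_add, map_add, map_add, map_sum, map_sum, hY ψj j, hj, C_0, mul_zero,
      add_zero]
    simp only [hX]
    ring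

theorem exists_mem_Ioo_forall_nonneg_exists_eq_zero {ι : Type*} [Fintype ι] {φ : ι → ℝ → ℝ}
    (hφ : ∀ k, Continuous (φ k)) (h₀ : ∀ k, 0 < φ k 0) (h₁ : ∃ j, φ j 1 < 0) :
    ∃ t ∈ Ioo (0 : ℝ) 1, (∀ k, 0 ≤ φ k t) ∧ ∃ j, φ j t = 0 := by
  obtain ⟨j, hj⟩ := h₁
  have hne : (Finset.univ : Finset ι).Nonempty := ⟨j, Finset.mem_univ j⟩
  set ψ : ℝ → ℝ := fun t => Finset.univ.inf' hne fun k => φ k t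
  have hψ : Continuous ψ := Continuous.finset_inf'_apply hne fun k _ => hφ k
  obtain ⟨t, ht, hψt⟩ : (0 : ℝ) ∈ ψ '' Ioo 0 1 :=
    intermediate_value_Ioo' zero_le_one hψ.continuousOn
      ⟨(Finset.inf'_lt_iff hne).2 ⟨j, Finset.mem_univ j, hj⟩,
        (Finset.lt_inf'_iff hne).2 fun k _ => h₀ k⟩
  obtain ⟨i, -, hi⟩ := Finset.exists_mem_eq_inf' hne fun k => φ k t
  exact ⟨t, ht, fun k => hψt ▸ Finset.inf'_le _ (Finset.mem_univ k), i, hi ▸ hψt⟩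

theorem dotProduct_sub_pos_of_mem_nhds {ι : Type*} [Fintype ι] {K : Set (ι → ℝ)}
    {x₀ u w : ι → ℝ} (hK : K ∈ 𝓝 x₀) (hsupp : ∀ z ∈ K, 0 ≤ w ⬝ᵥ (z - u)) (hw : w ≠ 0) :
    0 < w ⬝ᵥ (x₀ - u) := by
  have hlim : Tendsto (fun c : ℝ => x₀ - c • w) (𝓝[>] 0) (𝓝 x₀) := by
    have hcont : Continuous fun c : ℝ => x₀ - c • w := by fun_prop
    simpa using (hcont.tendsto 0).mono_left nhdsWithin_le_nhds
  obtain ⟨c, hcK, hc⟩ := ((hlim.eventually hK).and self_mem_nhdsWithin).exists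
  have hww : 0 < w ⬝ᵥ w := by simpa using Matrix.dotProduct_self_star_pos_iff.2 hw
  have h := hsupp _ hcK
  rw [sub_right_comm, dotProduct_sub, dotProduct_smul, smul_eq_mul] at h
  nlinarith [mul_pos (mem_Ioi.1 hc) hww]

theorem mem_nhds_of_forall_eval_pos {σ ι : Type*} [Finite ι] {g : ι → MvPolynomial σ ℝ}
    {x₀ : σ → ℝ} (h : ∀ k, 0 < eval x₀ (g k)) : {x | ∀ k, 0 ≤ eval x (g k)} ∈ 𝓝 x₀ := by
  filter_upwards [eventually_all.2 fun k =>
    (continuous_eval (g k)).continuousAt.eventually (lt_mem_nhds (h k))] with x hx k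
  exact (hx k).le

section MomentSet

variable {σ ι : Type*}

def momentSet (g : ι → MvPolynomial σ ℝ) (d : ℕ) : Set (σ → ℝ) :=
  {x | ∃ L : MvPolynomial σ ℝ →ₗ[ℝ] ℝ,
      L 1 = 1 ∧ (∀ i, L (X i) = x i) ∧
      (∀ p, IsSOSUpTo d p → 0 ≤ L p) ∧
      (∀ j, ∀ p : MvPolynomial σ ℝ, IsSOS p → (p * g j).totalDegree ≤ 2 * d → 0 ≤ L (p * g j))}

theorem convex_momentSet (g : ι → MvPolynomial σ ℝ) (d : ℕ) : Convex ℝ (momentSet g d) := by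
  rintro x ⟨L, hL1, hLX, hLsos, hLloc⟩ y ⟨M, hM1, hMX, hMsos, hMloc⟩ a b ha hb hab
  refine ⟨a • L + b • M, by simp [hL1, hM1, hab], fun i => by simp [hLX, hMX], fun p hp => ?_,
    fun j p hp hdeg => ?_⟩
  · exact add_nonneg (mul_nonneg ha (hLsos p hp)) (mul_nonneg hb (hMsos p hp))
  · exact add_nonneg (mul_nonneg ha (hLloc j p hp hdeg)) (mul_nonneg hb (hMloc j p hp hdeg))

theorem subset_momentSet (g : ι → MvPolynomial σ ℝ) (d : ℕ) :
    {x | ∀ j, 0 ≤ eval x (g j)} ⊆ momentSet g d := by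
  intro x hx
  have hsos : ∀ {p : MvPolynomial σ ℝ}, IsSOS p → 0 ≤ eval x p :=
    fun hp => ((isSOS_iff_isSumSq.1 hp).map (eval x)).nonneg
  refine ⟨(aeval x).toLinearMap, by simp, by simp, fun p hp => ?_, fun j p hp _ => ?_⟩
  · obtain ⟨k, q, -, rfl⟩ := hp
    simpa using hsos ⟨k, q, rfl⟩
  · simpa using mul_nonneg (hsos hp) (hx j)

end MomentSet

theorem momentSet_subset {n m : ℕ} {g : Fin m → MvPolynomial (Fin n) ℝ} {dj : Fin m → ℕ} {d : ℕ}
    (hslater : ∃ x₀ : Fin n → ℝ, ∀ j, 0 < eval x₀ (g j))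
    (hnd : ∀ j, ∀ y ∈ {x | ∀ k, 0 ≤ eval x (g k)}, eval y (g j) = 0 →
      (fun i => eval y (pderiv i (g j))) ≠ 0)
    (hcert : CertificateOfConvexity g dj) (hd : ∀ j, dj j ≤ d) :
    momentSet g d ⊆ {x | ∀ k, 0 ≤ eval x (g k)} := by
  intro x hx
  by_contra hxK
  obtain ⟨x₀, hx₀⟩ := hslater
  obtain ⟨t, ⟨ht₀, ht₁⟩, huK, j, hj⟩ :=
    exists_mem_Ioo_forall_nonneg_exists_eq_zero (φ := fun k t => eval (x₀ + t • (x - x₀)) (g k))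
      (fun k => (continuous_eval (g k)).comp (by fun_prop)) (by simpa using hx₀)
      (by simpa using hxK)
  set u := x₀ + t • (x - x₀)
  set w : Fin n → ℝ := fun i => eval u (pderiv i (g j))
  have hmem : affineForm w u ∈ truncatedQuadraticModule g d := by
    rw [← evalInr_gradIP]
    exact truncatedQuadraticModule_mono g (hd j) (hcert.evalInr_gradIP_mem j huK hj)
  -- `K ⊆ momentSet g d`, so this also says that `K` lies on one side of the hyperplane.
  have hsupp : ∀ y ∈ momentSet g d, 0 ≤ w ⬝ᵥ (y - u) := by
    rintro y ⟨L, hL1, hLX, hLsos, hLloc⟩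
    rw [← map_affineForm hL1 hLX]
    exact map_nonneg_of_mem_truncatedQuadraticModule hLsos hLloc hmem
  have hstrict : 0 < w ⬝ᵥ (x₀ - u) :=
    dotProduct_sub_pos_of_mem_nhds (mem_nhds_of_forall_eval_pos hx₀)
      (fun z hz => hsupp z (subset_momentSet g d hz)) (hnd j u huK hj)
  have hmoment := hsupp x hx
  rw [show x₀ - u = (-t) • (x - x₀) by module, dotProduct_smul, smul_eq_mul] at hstrict
  rw [show x - u = (1 - t) • (x - x₀) by module, dotProduct_smul, smul_eq_mul] at hmoment
  nlinarith

theorem stmt_16_general (n m : ℕ) (g : Fin m → MvPolynomial (Fin n) ℝ)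
    (K : Set (Fin n → ℝ)) (hK : K = {x | ∀ j, 0 ≤ eval x (g j)})
    (slater : ∃ x₀ : Fin n → ℝ, ∀ j, 0 < eval x₀ (g j))
    (hnd : ∀ j : Fin m, ∀ y ∈ K, eval y (g j) = 0 →
      (fun i => eval y (pderiv i (g j))) ≠ (0 : Fin n → ℝ))
    (dj : Fin m → ℕ) (hcert : CertificateOfConvexity g dj)
    (d : ℕ) (hd : d = Finset.univ.sup dj) :
    Convex ℝ K ∧
    K = {x | ∃ L : MvPolynomial (Fin n) ℝ →ₗ[ℝ] ℝ,
      L 1 = 1 ∧ (∀ i, L (X i) = x i) ∧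
      (∀ σ, IsSOSUpTo d σ → 0 ≤ L σ) ∧
      (∀ j : Fin m, ∀ σ : MvPolynomial (Fin n) ℝ, IsSOS σ →
        (σ * g j).totalDegree ≤ 2 * d → 0 ≤ L (σ * g j))} := by
  subst hK
  have hdj : ∀ j, dj j ≤ d := fun j => hd ▸ Finset.le_sup (Finset.mem_univ j)
  have hKS : {x | ∀ j, 0 ≤ eval x (g j)} = momentSet g d :=
    (subset_momentSet g d).antisymm (momentSet_subset slater hnd hcert hdj)
  exact ⟨hKS ▸ convex_momentSet g d, hKS⟩

/-- under the Archimedean assumption, Slater's condition, the boundary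
nondegeneracy, and the certificate of convexity with degree bounds `2d₁,…,2dₘ`
(`d := maxⱼ dⱼ`), the set `K` is convex and admits the explicit semidefinite
representation by moment and localizing conditions of order `d`. -/
theorem stmt_16 (n m : ℕ) (g : Fin m → MvPolynomial (Fin n) ℝ)
    (K : Set (Fin n → ℝ)) (hK : K = {x | ∀ j, 0 ≤ eval x (g j)})
    (hcompact : IsCompact K)
    (harch : ∃ (M : ℝ) (σ₀ : MvPolynomial (Fin n) ℝ) (σ : Fin m → MvPolynomial (Fin n) ℝ),
      IsSOS σ₀ ∧ (∀ j, IsSOS (σ j)) ∧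
      C M - ∑ i, X i ^ 2 = σ₀ + ∑ j, σ j * g j)
    (slater : ∃ x₀ : Fin n → ℝ, ∀ j, 0 < eval x₀ (g j))
    (hnd : ∀ j : Fin m, ∀ y ∈ K, eval y (g j) = 0 →
      (fun i => eval y (pderiv i (g j))) ≠ (0 : Fin n → ℝ))
    (dj : Fin m → ℕ) (hcert : CertificateOfConvexity g dj)
    (d : ℕ) (hd : d = Finset.univ.sup dj) :
    Convex ℝ K ∧
    K = {x | ∃ L : MvPolynomial (Fin n) ℝ →ₗ[ℝ] ℝ,
      L 1 = 1 ∧ (∀ i, L (X i) = x i) ∧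
      (∀ σ, IsSOSUpTo d σ → 0 ≤ L σ) ∧
      (∀ j : Fin m, ∀ σ : MvPolynomial (Fin n) ℝ, IsSOS σ →
        (σ * g j).totalDegree ≤ 2 * d → 0 ≤ L (σ * g j))} :=
  stmt_16_general n m g K hK slater hnd dj hcert d hd
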